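/- Let V = ℝ⁴ with basis p₁,q₁,p₂,q₂ and the symplectic form Ω determined by Ω(p₁,q₁) = Ω(p₂,q₂) = −1 and Ω = 0 on all other pairs of distinct basis vectors. Let 𝔥 ⊂ 𝔰𝔭(V,Ω) be the real span of the five elements p₂²+q₂², p₁q₁, p₁p₂, p₁q₂, p₁² (under the identification uv ↦ (w ↦ Ω(u,w)v + Ω(v,w)u)), and let 𝔭 = {L ∈ 𝔰𝔭(V,Ω) : L·p₁ ∈ ℝ·p₁} be the subalgebra stabilizing the line ℝp₁. For D ∈ SL(span(p₂,q₂)) let g̃ ∈ GL(V) be the symplectic map with g̃p₁ = q₁, g̃q₁ = −p₁ and g̃ = D on span(p₂,q₂). Then for every such D one has 𝔭 ∩ g̃𝔥g̃⁻¹ = span{ p₁q₁ , (Dp₂)² + (Dq₂)² }; in particular this intersection is 2-dimensional. -/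

import Mathlib

open Matrix

/-- The Gram matrix of the symplectic form `Ω` on `ℝ⁴` in the basis `p₁,q₁,p₂,q₂`:
`Ω(p₁,q₁) = Ω(p₂,q₂) = −1` and `Ω = 0` on the other pairs of distinct basis vectors. -/
def OmMat : Matrix (Fin 4) (Fin 4) ℝ :=
  !![0, -1, 0, 0;
     1, 0, 0, 0;
     0, 0, 0, -1;
     0, 0, 1, 0]

/-- The symplectic form `Ω(x,y)`. -/
def Om (x y : Fin 4 → ℝ) : ℝ := x ⬝ᵥ OmMat.mulVec y

/-- The basis vectors `p₁, q₁, p₂, q₂` of `V = ℝ⁴`. -/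
noncomputable def p1 : Fin 4 → ℝ := Pi.single 0 1
noncomputable def q1 : Fin 4 → ℝ := Pi.single 1 1
noncomputable def p2 : Fin 4 → ℝ := Pi.single 2 1
noncomputable def q2 : Fin 4 → ℝ := Pi.single 3 1

/-- The matrix of the endomorphism `uv : w ↦ Ω(u,w)v + Ω(v,w)u` of `ℝ⁴`
(the standard identification `𝔰𝔭₄(ℝ) ≅ S²(ℝ⁴)`). -/
noncomputable def sprod (u v : Fin 4 → ℝ) : Matrix (Fin 4) (Fin 4) ℝ :=
  Matrix.of fun i j => Om u (Pi.single j 1) * v i + Om v (Pi.single j 1) * u i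

/-- The subalgebra `𝔥 = span(p₂²+q₂², p₁q₁, p₁p₂, p₁q₂, p₁²) ⊂ 𝔰𝔭(V,Ω)`. -/
noncomputable def hAlg : Submodule ℝ (Matrix (Fin 4) (Fin 4) ℝ) :=
  Submodule.span ℝ {sprod p2 p2 + sprod q2 q2, sprod p1 q1, sprod p1 p2,
    sprod p1 q2, sprod p1 p1}

/-- The symplectic map `g̃` with `g̃p₁ = q₁`, `g̃q₁ = −p₁`, `g̃ = D` on `span(p₂,q₂)`. -/
def gTilde (D : Matrix (Fin 2) (Fin 2) ℝ) : Matrix (Fin 4) (Fin 4) ℝ :=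
  !![0, -1, 0, 0;
     1, 0, 0, 0;
     0, 0, D 0 0, D 0 1;
     0, 0, D 1 0, D 1 1]

/-! The symplectic map `g̃` satisfies `g̃ (uv) g̃⁻¹ = (g̃u)(g̃v)`, and `g̃⁻¹p₁ = -q₁`. Hence
`g̃hg̃⁻¹` stabilises the line `ℝp₁` iff `h` stabilises `ℝq₁`, and the intersection in question is
the conjugate by `g̃` of `𝔥 ∩ stab(ℝq₁)`, which does not depend on `D`. Since
`(uv)q₁ = Ω(u,q₁)v + Ω(v,q₁)u`, the generators of `𝔥` send `q₁` to `0, -q₁, -p₂, -q₂, -2p₁`,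
so `𝔥 ∩ stab(ℝq₁) = span(p₂²+q₂², p₁q₁)`; its conjugate is
`span((Dp₂)²+(Dq₂)², -p₁q₁)`. -/

lemma sprod_eq_vecMulVec (u v : Fin 4 → ℝ) :
    sprod u v = vecMulVec v (u ᵥ* OmMat) + vecMulVec u (v ᵥ* OmMat) := by
  ext i j
  simp [sprod, Om, vecMulVec_apply, vecMul, dotProduct, mul_comm]

lemma sprod_mulVec (u v w : Fin 4 → ℝ) : sprod u v *ᵥ w = Om u w • v + Om v w • u := by
  simp [sprod_eq_vecMulVec, add_mulVec, vecMulVec_mulVec, Om, dotProduct_mulVec]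

lemma sprod_comm (u v : Fin 4 → ℝ) : sprod u v = sprod v u := by
  rw [sprod_eq_vecMulVec, sprod_eq_vecMulVec, add_comm]

lemma sprod_neg_right (u v : Fin 4 → ℝ) : sprod u (-v) = -sprod u v := by
  simp only [sprod_eq_vecMulVec, neg_vecMul, vecMulVec_neg, neg_vecMulVec, neg_add]

lemma Om_single_single (i j : Fin 4) : Om (Pi.single i 1) (Pi.single j 1) = OmMat i j := by
  simp [Om]

lemma OmMat_transpose : OmMatᵀ = -OmMat := by
  ext i j
  fin_cases i <;> fin_cases j <;> simp [OmMat]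

lemma OmMat_mul_self : OmMat * OmMat = -1 := by
  ext i j
  fin_cases i <;> fin_cases j <;> simp [OmMat, mul_apply, Fin.sum_univ_four, one_apply]

lemma transpose_mul_add_mul_eq_zero_iff {n R : Type*} [Fintype n] [DecidableEq n] [CommRing R]
    (J L : Matrix n n R) : Lᵀ * J + J * L = 0 ↔ L ∈ skewAdjointMatricesSubmodule J := by
  rw [mem_skewAdjointMatricesSubmodule, Matrix.IsSkewAdjoint, Matrix.IsAdjointPair,
    Matrix.mul_neg, add_eq_zero_iff_eq_neg]

lemma sprod_mem_skewAdjointMatricesSubmodule (u v : Fin 4 → ℝ) :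
    sprod u v ∈ skewAdjointMatricesSubmodule OmMat := by
  simp only [mem_skewAdjointMatricesSubmodule, Matrix.IsSkewAdjoint, Matrix.IsAdjointPair,
    sprod_eq_vecMulVec, Matrix.transpose_add, transpose_vecMulVec, Matrix.add_mul,
    Matrix.mul_add, vecMulVec_mul, mul_vecMulVec, Matrix.mul_neg, ← vecMul_transpose,
    OmMat_transpose, vecMul_neg, neg_vecMulVec, neg_add, neg_neg]
  exact add_comm _ _

lemma hAlg_le_skewAdjointMatricesSubmodule : hAlg ≤ skewAdjointMatricesSubmodule OmMat := by
  simp only [hAlg, Submodule.span_le, Set.insert_subset_iff, Set.singleton_subset_iff,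
    SetLike.mem_coe, sprod_mem_skewAdjointMatricesSubmodule, and_true]
  exact add_mem (sprod_mem_skewAdjointMatricesSubmodule _ _)
    (sprod_mem_skewAdjointMatricesSubmodule _ _)

lemma isUnit_det_of_transpose_mul_OmMat_mul {g : Matrix (Fin 4) (Fin 4) ℝ}
    (hg : gᵀ * OmMat * g = OmMat) : IsUnit g.det := by
  refine isUnit_det_of_left_inverse (B := -(OmMat * gᵀ * OmMat)) ?_
  calc -(OmMat * gᵀ * OmMat) * g = -(OmMat * (gᵀ * OmMat * g)) := by
        simp only [Matrix.neg_mul, Matrix.mul_assoc]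
    _ = 1 := by rw [hg, OmMat_mul_self, neg_neg]

lemma conj_sprod {g : Matrix (Fin 4) (Fin 4) ℝ} (hg : gᵀ * OmMat * g = OmMat)
    (hdet : IsUnit g.det) (u v : Fin 4 → ℝ) :
    g * sprod u v * g⁻¹ = sprod (g *ᵥ u) (g *ᵥ v) := by
  have hform : ∀ x : Fin 4 → ℝ, (g *ᵥ x) ᵥ* OmMat ᵥ* g = x ᵥ* OmMat := fun x => by
    rw [← vecMul_transpose, vecMul_vecMul, vecMul_vecMul, ← Matrix.mul_assoc, hg]
  have hcomm : g * sprod u v = sprod (g *ᵥ u) (g *ᵥ v) * g := by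
    simp only [sprod_eq_vecMulVec, Matrix.mul_add, Matrix.add_mul, mul_vecMulVec,
      vecMulVec_mul, hform]
  rw [hcomm, Matrix.mul_assoc, mul_nonsing_inv _ hdet, Matrix.mul_one]

lemma conj_mem_skewAdjointMatricesSubmodule {n R : Type*} [Fintype n] [DecidableEq n]
    [CommRing R] {J g A : Matrix n n R} (hg : gᵀ * J * g = J) (hdet : IsUnit g.det)
    (hA : A ∈ skewAdjointMatricesSubmodule J) : g * A * g⁻¹ ∈ skewAdjointMatricesSubmodule J := by
  rw [mem_skewAdjointMatricesSubmodule, Matrix.IsSkewAdjoint] at hA ⊢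
  rw [← hg] at hA
  simpa [Matrix.mul_neg, Matrix.neg_mul] using
    (Matrix.isAdjointPair_equiv J A (-A) g ((Matrix.isUnit_iff_isUnit_det g).2 hdet)).1 hA

lemma conj_mulVec_mem_span_singleton_iff {n R : Type*} [Fintype n] [DecidableEq n]
    [CommRing R] {g : Matrix n n R} (hdet : IsUnit g.det) (h : Matrix n n R) (w : n → R) :
    (g * h * g⁻¹) *ᵥ (g *ᵥ w) ∈ R ∙ (g *ᵥ w) ↔ h *ᵥ w ∈ R ∙ w := by
  have hinj : Function.Injective g.mulVec := Function.LeftInverse.injective (g := (g⁻¹).mulVec)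
    fun x => by rw [mulVec_mulVec, nonsing_inv_mul _ hdet, one_mulVec]
  have hconj : (g * h * g⁻¹) *ᵥ (g *ᵥ w) = g *ᵥ (h *ᵥ w) := by
    rw [mulVec_mulVec, mulVec_mulVec, Matrix.mul_assoc, nonsing_inv_mul _ hdet, Matrix.mul_one]
  simp only [Submodule.mem_span_singleton, hconj, ← mulVec_smul, hinj.eq_iff]

noncomputable def conjLinearMap {n R : Type*} [Fintype n] [DecidableEq n] [CommRing R]
    (g : Matrix n n R) : Matrix n n R →ₗ[R] Matrix n n R :=
  LinearMap.mulRight R g⁻¹ ∘ₗ LinearMap.mulLeft R g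

lemma conjLinearMap_injective {n R : Type*} [Fintype n] [DecidableEq n] [CommRing R]
    {g : Matrix n n R} (hdet : IsUnit g.det) : Function.Injective (conjLinearMap g) := by
  have hcancel : ∀ z, g⁻¹ * conjLinearMap g z * g = z := fun z => by
    simp only [conjLinearMap, LinearMap.comp_apply, LinearMap.mulLeft_apply,
      LinearMap.mulRight_apply, Matrix.mul_assoc, nonsing_inv_mul _ hdet, Matrix.mul_one]
    rw [← Matrix.mul_assoc, nonsing_inv_mul _ hdet, Matrix.one_mul]
  intro x y hxy
  rw [← hcancel x, hxy, hcancel]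

lemma gTilde_transpose_mul_OmMat_mul {D : Matrix (Fin 2) (Fin 2) ℝ} (hD : D.det = 1) :
    (gTilde D)ᵀ * OmMat * gTilde D = OmMat := by
  rw [det_fin_two] at hD
  ext i j
  fin_cases i <;> fin_cases j <;>
    simp [gTilde, OmMat, mul_apply, Fin.sum_univ_four] <;> linarith

lemma gTilde_mulVec_p1 (D : Matrix (Fin 2) (Fin 2) ℝ) : gTilde D *ᵥ p1 = q1 := by
  ext i
  fin_cases i <;> simp [gTilde, p1, q1]

lemma gTilde_mulVec_q1 (D : Matrix (Fin 2) (Fin 2) ℝ) : gTilde D *ᵥ q1 = -p1 := by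
  ext i
  fin_cases i <;> simp [gTilde, p1, q1]

lemma mem_hAlg_and_mulVec_q1_mem_iff (h : Matrix (Fin 4) (Fin 4) ℝ) :
    (h ∈ hAlg ∧ h *ᵥ q1 ∈ ℝ ∙ q1) ↔
      h ∈ Submodule.span ℝ {sprod p2 p2 + sprod q2 q2, sprod p1 q1} := by
  constructor
  · rintro ⟨hh, hq⟩
    simp only [hAlg, Submodule.mem_span_insert, Submodule.mem_span_singleton] at hh
    obtain ⟨a, _, ⟨b, _, ⟨c, _, ⟨d, _, ⟨e, rfl⟩, rfl⟩, rfl⟩, rfl⟩, rfl⟩ := hh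
    obtain ⟨r, hr⟩ := Submodule.mem_span_singleton.1 hq
    simp only [add_mulVec, smul_mulVec, sprod_mulVec] at hr
    have hp1 := congrFun hr 0
    have hp2 := congrFun hr 2
    have hq2 := congrFun hr 3
    simp [p1, q1, p2, q2, Om_single_single, OmMat] at hp1 hp2 hq2
    obtain rfl : e = 0 := by linarith
    subst hp2 hq2
    exact Submodule.mem_span_pair.2 ⟨a, b, by simp⟩
  · intro hh
    refine ⟨Submodule.span_mono
      (Set.insert_subset_insert (Set.singleton_subset_iff.2 (Set.mem_insert _ _))) hh, ?_⟩
    obtain ⟨a, b, rfl⟩ := Submodule.mem_span_pair.1 hh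
    refine Submodule.mem_span_singleton.2 ⟨-b, ?_⟩
    simp only [add_mulVec, smul_mulVec, sprod_mulVec]
    ext i
    fin_cases i <;> simp [p1, q1, p2, q2, Om_single_single, OmMat]

lemma finrank_span_p2p2_add_q2q2_p1q1 :
    Module.finrank ℝ (Submodule.span ℝ
      ({sprod p2 p2 + sprod q2 q2, sprod p1 q1} : Set (Matrix (Fin 4) (Fin 4) ℝ))) = 2 := by
  have hli : LinearIndependent ℝ ![sprod p2 p2 + sprod q2 q2, sprod p1 q1] := by
    refine LinearIndependent.pair_iff.2 fun s t hst => ?_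
    have hq1 := congrFun (congrArg (· *ᵥ q1) hst) 1
    have hp2 := congrFun (congrArg (· *ᵥ p2) hst) 3
    simp only [add_mulVec, smul_mulVec, sprod_mulVec, zero_mulVec] at hq1 hp2
    simp [p1, q1, p2, q2, Om_single_single, OmMat] at hq1 hp2
    exact ⟨hp2, hq1⟩
  have := finrank_span_eq_card hli
  rwa [Matrix.range_cons_cons_empty, Fintype.card_fin] at this

lemma map_conjLinearMap_gTilde_span {D : Matrix (Fin 2) (Fin 2) ℝ} (hD : D.det = 1) :
    (Submodule.span ℝ {sprod p2 p2 + sprod q2 q2, sprod p1 q1}).map (conjLinearMap (gTilde D)) =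
      Submodule.span ℝ {sprod p1 q1,
        sprod (gTilde D *ᵥ p2) (gTilde D *ᵥ p2) + sprod (gTilde D *ᵥ q2) (gTilde D *ᵥ q2)} := by
  have hg := gTilde_transpose_mul_OmMat_mul hD
  have hconj : ∀ u v, conjLinearMap (gTilde D) (sprod u v) =
      sprod (gTilde D *ᵥ u) (gTilde D *ᵥ v) :=
    conj_sprod hg (isUnit_det_of_transpose_mul_OmMat_mul hg)
  rw [Submodule.map_span, Set.image_pair, map_add, hconj, hconj, hconj, gTilde_mulVec_p1,
    gTilde_mulVec_q1, sprod_neg_right, sprod_comm q1, Set.pair_comm, Submodule.span_insert,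
    Submodule.span_insert, ← Set.neg_singleton, Submodule.span_neg]

/-- For every `D ∈ SL(span(p₂,q₂))`, the intersection of the parabolic
`𝔭 = {L ∈ 𝔰𝔭(V,Ω) : L·p₁ ∈ ℝ·p₁}` with `g̃𝔥g̃⁻¹` equals
`span(p₁q₁, (Dp₂)² + (Dq₂)²)`; in particular it is 2-dimensional. -/
theorem parabolic_inter_conjugated_stabilizer (D : Matrix (Fin 2) (Fin 2) ℝ)
    (hD : D.det = 1) :
    {L : Matrix (Fin 4) (Fin 4) ℝ |
        (Lᵀ * OmMat + OmMat * L = 0 ∧ L.mulVec p1 ∈ Submodule.span ℝ {p1}) ∧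
        ∃ h ∈ hAlg, L = gTilde D * h * (gTilde D)⁻¹}
      = ↑(Submodule.span ℝ
          {sprod p1 q1,
           sprod ((gTilde D).mulVec p2) ((gTilde D).mulVec p2) +
             sprod ((gTilde D).mulVec q2) ((gTilde D).mulVec q2)}) ∧
    Module.finrank ℝ
        (Submodule.span ℝ
          ({sprod p1 q1,
            sprod ((gTilde D).mulVec p2) ((gTilde D).mulVec p2) +
              sprod ((gTilde D).mulVec q2) ((gTilde D).mulVec q2)} :
            Set (Matrix (Fin 4) (Fin 4) ℝ))) = 2 := by
  have hg := gTilde_transpose_mul_OmMat_mul hD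
  have hdet := isUnit_det_of_transpose_mul_OmMat_mul hg
  have hstab : ∀ h, (gTilde D * h * (gTilde D)⁻¹) *ᵥ p1 ∈ ℝ ∙ p1 ↔ h *ᵥ q1 ∈ ℝ ∙ q1 :=
    fun h => by
      simpa [gTilde_mulVec_q1, ← Set.neg_singleton, Submodule.span_neg, mulVec_neg,
        Submodule.neg_mem_iff] using conj_mulVec_mem_span_singleton_iff hdet h q1
  rw [← map_conjLinearMap_gTilde_span hD]
  refine ⟨Set.ext fun L => ⟨?_, ?_⟩, ?_⟩
  · rintro ⟨⟨-, hL⟩, h, hh, rfl⟩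
    exact ⟨h, (mem_hAlg_and_mulVec_q1_mem_iff h).1 ⟨hh, (hstab h).1 hL⟩, rfl⟩
  · rintro ⟨h, hS, rfl⟩
    obtain ⟨hh, hq⟩ := (mem_hAlg_and_mulVec_q1_mem_iff h).2 hS
    refine ⟨⟨(transpose_mul_add_mul_eq_zero_iff _ _).2 ?_, (hstab h).2 hq⟩, h, hh, rfl⟩
    exact conj_mem_skewAdjointMatricesSubmodule hg hdet (hAlg_le_skewAdjointMatricesSubmodule hh)
  · rw [← finrank_span_p2p2_add_q2q2_p1q1]
    exact (Submodule.equivMapOfInjective _ (conjLinearMap_injective hdet) _).finrank_eq.symm
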